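/- arXiv:2308.13887 — 10 statements merged into one kernel-verified Lean document; each statement's English description precedes it below -/
import Mathlib

section
/- Let G be a graph and u, v two distinct vertices of G. In the blow-up ⊗^n G, the set T_u ∪ T_v (where T_w = {(j,w) : j ∈ ℤ_n}) is a twin set if and only if u and v are non-adjacent twins in G. -/
/-- The blow-up of `n` copies of `G`. -/
def SimpleGraph.blowup {V : Type*} (n : ℕ) (G : SimpleGraph V) : SimpleGraph (ZMod n × V) :=
  G.comap Prod.snd

/-- A twin set: a set of vertices that are pairwise twins. -/
def SimpleGraph.IsTwinSet {V : Type*} (G : SimpleGraph V) (S : Set V) : Prop :=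
  ∀ x ∈ S, ∀ y ∈ S, G.neighborSet x \ {y} = G.neighborSet y \ {x}

/-!
Non-adjacent twins are exactly the vertices with equal neighbourhoods. In the blow-up the
neighbourhood of `(i, w)` is the full preimage of the neighbourhood of `w`, so copies of `u`
and `v` always have equal neighbourhoods when `u` and `v` do. Conversely, twinship of `(0, u)`
and `(1, v)` transfers `w ∈ N(u)` to `w ∈ N(v)` through the copy `(0, w)`, which is never the
removed vertex `(1, v)` because `0 ≠ 1` in `ZMod n` for `n ≥ 2`; symmetrically through `(1, w)`.
-/

namespace SimpleGraph

variable {V : Type*} (G : SimpleGraph V)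

theorem not_adj_and_twins_iff_neighborSet_eq {u v : V} :
    (¬ G.Adj u v ∧ G.neighborSet u \ {v} = G.neighborSet v \ {u}) ↔
      G.neighborSet u = G.neighborSet v := by
  constructor
  · rintro ⟨hnadj, htwin⟩
    have hv : v ∉ G.neighborSet u := hnadj
    have hu : u ∉ G.neighborSet v := fun h => hnadj (G.adj_symm h)
    rwa [Set.sdiff_singleton_eq_self hv, Set.sdiff_singleton_eq_self hu] at htwin
  · intro h
    have hv : v ∉ G.neighborSet u := h ▸ G.notMem_neighborSet_self
    have hu : u ∉ G.neighborSet v := h ▸ G.notMem_neighborSet_self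
    exact ⟨hv, by rw [Set.sdiff_singleton_eq_self hv, Set.sdiff_singleton_eq_self hu, h]⟩

theorem isTwinSet_of_neighborSet_eq {S : Set V}
    (h : ∀ x ∈ S, ∀ y ∈ S, G.neighborSet x = G.neighborSet y) : G.IsTwinSet S :=
  fun x hx y hy => ((G.not_adj_and_twins_iff_neighborSet_eq).mpr (h x hx y hy)).2

theorem blowup_neighborSet (n : ℕ) (p : ZMod n × V) :
    (G.blowup n).neighborSet p = Prod.snd ⁻¹' G.neighborSet p.2 :=
  rfl

theorem neighborSet_eq_of_blowup_twins {n : ℕ} {i j : ZMod n} (hij : i ≠ j) {u v : V}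
    (h : (G.blowup n).neighborSet (i, u) \ {(j, v)} =
      (G.blowup n).neighborSet (j, v) \ {(i, u)}) :
    G.neighborSet u = G.neighborSet v := by
  ext w
  constructor
  · intro hw
    have hcopy : (i, w) ∈ (G.blowup n).neighborSet (i, u) \ {(j, v)} :=
      ⟨hw, fun heq => hij (Prod.ext_iff.mp heq).1⟩
    exact (h ▸ hcopy).1
  · intro hw
    have hcopy : (j, w) ∈ (G.blowup n).neighborSet (j, v) \ {(i, u)} :=
      ⟨hw, fun heq => hij (Prod.ext_iff.mp heq).1.symm⟩
    exact (h.symm ▸ hcopy).1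

end SimpleGraph

open SimpleGraph in
theorem blowup_twinSet_iff_general {V : Type*} (n : ℕ) (hn : 2 ≤ n) (G : SimpleGraph V)
    (u v : V) :
    (G.blowup n).IsTwinSet ({p : ZMod n × V | p.2 = u} ∪ {p : ZMod n × V | p.2 = v}) ↔
      (¬ G.Adj u v ∧ G.neighborSet u \ {v} = G.neighborSet v \ {u}) := by
  rw [not_adj_and_twins_iff_neighborSet_eq]
  constructor
  · intro htwin
    have h01 : (0 : ZMod n) ≠ 1 := by
      have : Fact (1 < n) := ⟨hn⟩
      exact zero_ne_one
    exact G.neighborSet_eq_of_blowup_twins h01 (htwin (0, u) (Or.inl rfl) (1, v) (Or.inr rfl))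
  · intro huv
    have hcopies : ∀ p ∈ {p : ZMod n × V | p.2 = u} ∪ {p : ZMod n × V | p.2 = v},
        (G.blowup n).neighborSet p = Prod.snd ⁻¹' G.neighborSet u := by
      rintro p (hp | hp) <;> rw [blowup_neighborSet, Set.mem_ofPred_eq.mp hp, huv]
    exact isTwinSet_of_neighborSet_eq _ fun x hx y hy => (hcopies x hx).trans (hcopies y hy).symm

/-- `T_u ∪ T_v` is a twin set in the blow-up `⊗ⁿ G` iff `u` and `v` are non-adjacent
twins in `G`. -/
theorem blowup_twinSet_iff {V : Type*} (n : ℕ) (hn : 2 ≤ n) (G : SimpleGraph V)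
    (u v : V) (huv : u ≠ v) :
    (G.blowup n).IsTwinSet ({p : ZMod n × V | p.2 = u} ∪ {p : ZMod n × V | p.2 = v}) ↔
      (¬ G.Adj u v ∧ G.neighborSet u \ {v} = G.neighborSet v \ {u}) :=
  blowup_twinSet_iff_general n hn G u v
end

section
/- Let A be a real symmetric m×m matrix with spectral decomposition A = Σ_{j=1}^{d} λ_j E_j (including λ_d = 0 with E_d possibly zero). Let U_n(t) = exp(−it (J_n ⊗ A)). Then for any vertex index u, the (⟨0,u⟩, ⟨1,u⟩) entry of U_n(t) equals (1/n) Σ_{j=1}^{d} (exp(−i n λ_j t) − 1) (E_j)_{u,u}. -/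
/-!
With `J` the all-ones matrix, `J * J = n • J`, so the matrices `N j = J ⊗ E j` satisfy
`N j * N k = δ_{jk} n • N j`. For such a family `(∑ c_j • N j)^(k+1) = ∑ (c_j^(k+1) n^k) • N j`,
and summing the exponential series gives `exp (∑ c_j • N j) = 1 + ∑ ((exp (n c_j) - 1) / n) • N j`.
Off the diagonal the identity contributes nothing and every entry of `J` is `1`.
-/

open Matrix Kronecker

lemma Complex.hasSum_exp_sub_one_div (c : ℂ) {ν : ℂ} (hν : ν ≠ 0) :
    HasSum (fun k : ℕ => ((k + 1).factorial : ℂ)⁻¹ * (c ^ (k + 1) * ν ^ k))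
      ((Complex.exp (ν * c) - 1) / ν) := by
  have hexp := NormedSpace.exp_series_hasSum_exp' (𝕂 := ℂ) (ν * c)
  rw [← Complex.exp_eq_exp_ℂ, ← hasSum_nat_add_iff' 1, Finset.sum_range_one, pow_zero,
    Nat.factorial_zero, Nat.cast_one, inv_one, one_smul] at hexp
  have hterm (k : ℕ) : ((k + 1).factorial : ℂ)⁻¹ * (c ^ (k + 1) * ν ^ k) =
      ((k + 1).factorial : ℂ)⁻¹ • (ν * c) ^ (k + 1) / ν := by
    rw [smul_eq_mul]
    field_simp
    ring
  simpa only [hterm] using hexp.div_const ν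

lemma sum_smul_pow_succ_of_mul_eq_ite {R A ι : Type*} [CommSemiring R] [Semiring A] [Algebra R A]
    [Fintype ι] [DecidableEq ι] (N : ι → A) (c : ι → R) (ν : R)
    (hN : ∀ j k, N j * N k = if j = k then ν • N j else 0) (k : ℕ) :
    (∑ j, c j • N j) ^ (k + 1) = ∑ j, (c j ^ (k + 1) * ν ^ k) • N j := by
  induction k with
  | zero => simp
  | succ k ih =>
    rw [pow_succ, ih, Finset.sum_mul]
    refine Finset.sum_congr rfl fun j _ => ?_
    rw [Finset.mul_sum, Finset.sum_eq_single j (fun l _ hl => by simp [hN, Ne.symm hl]) (by simp)]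
    simp only [smul_mul_smul_comm, hN, if_true, smul_smul]
    ring_nf

lemma NormedSpace.exp_sum_smul_of_mul_eq_ite {A ι : Type*} [NormedRing A] [NormedAlgebra ℂ A]
    [CompleteSpace A] [Fintype ι] [DecidableEq ι] (N : ι → A) (c : ι → ℂ) {ν : ℂ} (hν : ν ≠ 0)
    (hN : ∀ j k, N j * N k = if j = k then ν • N j else 0) :
    NormedSpace.exp (∑ j, c j • N j) = 1 + ∑ j, ((Complex.exp (ν * c j) - 1) / ν) • N j := by
  refine (NormedSpace.exp_series_hasSum_exp' (𝕂 := ℂ) _).unique ?_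
  rw [← hasSum_nat_add_iff' 1, Finset.sum_range_one, pow_zero, Nat.factorial_zero, Nat.cast_one,
    inv_one, one_smul, add_sub_cancel_left]
  have hpow (k : ℕ) : ((k + 1).factorial : ℂ)⁻¹ • (∑ j, c j • N j) ^ (k + 1) =
      ∑ j, (((k + 1).factorial : ℂ)⁻¹ * (c j ^ (k + 1) * ν ^ k)) • N j := by
    rw [sum_smul_pow_succ_of_mul_eq_ite N c ν hN, Finset.smul_sum]
    simp only [smul_smul]
  simp only [hpow]
  exact hasSum_sum fun j _ => (Complex.hasSum_exp_sub_one_div (c j) hν).smul_const (N j)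

open scoped Norms.Operator in
lemma Matrix.exp_sum_smul_of_mul_eq_ite {ι κ : Type*} [Fintype ι] [DecidableEq ι] [Fintype κ]
    [DecidableEq κ] (N : κ → Matrix ι ι ℂ) (c : κ → ℂ) {ν : ℂ} (hν : ν ≠ 0)
    (hN : ∀ j k, N j * N k = if j = k then ν • N j else 0) :
    NormedSpace.exp (∑ j, c j • N j) = 1 + ∑ j, ((Complex.exp (ν * c j) - 1) / ν) • N j :=
  NormedSpace.exp_sum_smul_of_mul_eq_ite N c hν hN

lemma Matrix.of_one_mul_of_one {α l m n : Type*} [NonAssocSemiring α] [Fintype m] :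
    (of fun _ _ => (1 : α) : Matrix l m α) * (of fun _ _ => 1 : Matrix m n α) =
      (Fintype.card m : α) • of fun _ _ => 1 := by
  ext
  simp [mul_apply]

/-- Entry formula for the transition matrix of a blow-up: with `A = Σ_j λ_j E_j` a spectral
decomposition (allowing the last eigenvalue to be `0` with projection possibly zero), the
`((0,u),(1,u))` entry of `exp(−it (J_n ⊗ A))` equals
`(1/n) Σ_j (exp(−i n λ_j t) − 1) (E_j)_{u,u}`. -/
theorem blowup_transition_entry {m n d : ℕ} (hn : 2 ≤ n)
    (A : Matrix (Fin m) (Fin m) ℂ) (lam : Fin (d + 1) → ℝ)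
    (E : Fin (d + 1) → Matrix (Fin m) (Fin m) ℂ)
    (horth : ∀ j k, E j * E k = if j = k then E j else 0)
    (hA : A = ∑ j, (lam j : ℂ) • E j)
    (u : Fin m) (t : ℝ) :
    NormedSpace.exp
        ((-(Complex.I * t)) •
          (((Matrix.of fun _ _ => (1 : ℂ)) : Matrix (Fin n) (Fin n) ℂ) ⊗ₖ A))
        (⟨⟨0, by omega⟩, u⟩) (⟨⟨1, by omega⟩, u⟩) =
      (n : ℂ)⁻¹ * ∑ j, (Complex.exp (-(Complex.I) * n * lam j * t) - 1) * E j u u := by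
  set J : Matrix (Fin n) (Fin n) ℂ := of fun _ _ => 1
  have hn0 : (n : ℂ) ≠ 0 := Nat.cast_ne_zero.2 (by omega)
  have hN : ∀ j k, (J ⊗ₖ E j) * (J ⊗ₖ E k) = if j = k then (n : ℂ) • (J ⊗ₖ E j) else 0 := by
    intro j k
    rw [← mul_kronecker_mul, of_one_mul_of_one, Fintype.card_fin, horth]
    split_ifs
    · exact smul_kronecker _ _ _
    · exact kronecker_zero _
  have hsplit : (-(Complex.I * t)) • (J ⊗ₖ A) = ∑ j, (-(Complex.I * t) * lam j) • (J ⊗ₖ E j) := by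
    ext
    simp [hA, J, Matrix.sum_apply, Finset.mul_sum, mul_assoc]
  rw [hsplit, Matrix.exp_sum_smul_of_mul_eq_ite _ _ hn0 hN, Matrix.add_apply,
    one_apply_ne (by simp [Fin.ext_iff]), zero_add, Matrix.sum_apply, Finset.mul_sum]
  refine Finset.sum_congr rfl fun j _ => ?_
  simp only [Matrix.smul_apply, kroneckerMap_apply, J, of_apply, smul_eq_mul, one_mul]
  ring_nf
end

section
/- Let G be a graph with adjacency matrix A having spectral projections E_λ. If a vertex u of G satisfies E_0 e_u = 0 when 0 is an eigenvalue (i.e., 0 ∉ σ_u(G)), then in the blow-up ⊗^2 G the vertices (0,u) and (1,u) are strongly cospectral: for every eigenvalue μ of ⊗^2 G with spectral projection F_μ, F_μ (e_0 ⊗ e_u) = ± F_μ (e_1 ⊗ e_u). Conversely, if 0 ∈ σ_u(G) then (0,u) and (1,u) are not strongly cospectral. -/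
instance {V : Type*} {n : ℕ} (G : SimpleGraph V) [h : DecidableRel G.Adj] :
    DecidableRel (G.blowup n).Adj := fun x y => h x.2 y.2

/-- `λ` belongs to the eigenvalue support of the vertex `u` (for a symmetric matrix, this is
equivalent to `E_λ e_u ≠ 0`). -/
def SuppMem {V : Type*} [Fintype V] (A : Matrix V V ℝ) (lam : ℝ) (u : V) : Prop :=
  ∃ x : V → ℝ, A.mulVec x = lam • x ∧ x u ≠ 0

/-- Vertices `x` and `y` are strongly cospectral for the symmetric matrix `B`: for each
eigenvalue `μ` there is a sign `ε` with `E_μ e_x = ε E_μ e_y`, expressed equivalently as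
`v x = ε * v y` for all `μ`-eigenvectors `v`. -/
def StronglyCospectral {W : Type*} [Fintype W] (B : Matrix W W ℝ) (x y : W) : Prop :=
  ∀ μ : ℝ, ∃ ε : ℝ, (ε = 1 ∨ ε = -1) ∧ ∀ v : W → ℝ, B.mulVec v = μ • v → v x = ε * v y

lemma zmod2_sum {M : Type*} [AddCommMonoid M] (f : ZMod 2 → M) : ∑ j, f j = f 0 + f 1 := by
  rw [show (Finset.univ : Finset (ZMod 2)) = {0, 1} by decide,
    Finset.sum_insert (by decide), Finset.sum_singleton]

lemma blowup_mulVec {V : Type*} [Fintype V] [DecidableEq V] (G : SimpleGraph V)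
    [DecidableRel G.Adj] (v : ZMod 2 × V → ℝ) (i : ZMod 2) (x : V) :
    ((G.blowup 2).adjMatrix ℝ).mulVec v (i, x)
      = (G.adjMatrix ℝ).mulVec (fun w => v (0, w) + v (1, w)) x := by
  simp only [Matrix.mulVec, dotProduct, Fintype.sum_prod_type,
    SimpleGraph.adjMatrix_apply, SimpleGraph.blowup, SimpleGraph.comap_adj]
  rw [zmod2_sum]
  rw [← Finset.sum_add_distrib]
  exact Finset.sum_congr rfl fun w _ => (mul_add _ _ _).symm

/-- In the blow-up `⊗² G`, the vertices `(0,u)` and `(1,u)` are strongly cospectral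
iff `0 ∉ σ_u(G)`. -/
theorem blowup_two_strongly_cospectral_iff {V : Type*} [Fintype V] [DecidableEq V]
    (G : SimpleGraph V) [DecidableRel G.Adj] (hG : G.Connected) (u : V) :
    ¬ SuppMem (G.adjMatrix ℝ) 0 u ↔
      StronglyCospectral ((G.blowup 2).adjMatrix ℝ) (0, u) (1, u) := by
  constructor
  · intro h μ
    by_cases hμ : μ = 0
    · refine ⟨-1, Or.inr rfl, fun v hv => ?_⟩
      have hs : (G.adjMatrix ℝ).mulVec (fun w => v (0, w) + v (1, w))
          = (0 : ℝ) • (fun w => v (0, w) + v (1, w)) := by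
        funext x
        rw [← blowup_mulVec G v 0 x, hv]
        simp [hμ]
      have h0 : v (0, u) + v (1, u) = 0 := by
        by_contra hc
        exact h ⟨_, hs, hc⟩
      linarith
    · refine ⟨1, Or.inl rfl, fun v hv => ?_⟩
      have e0 := congrFun hv (0, u)
      have e1 := congrFun hv (1, u)
      rw [blowup_mulVec] at e0 e1
      have : μ * v (0, u) = μ * v (1, u) := by
        simp only [Pi.smul_apply, smul_eq_mul] at e0 e1
        rw [← e0, ← e1]
      have := mul_left_cancel₀ hμ this
      linarith
  · rintro hsc ⟨x, hx, hxu⟩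
    obtain ⟨ε, hε, hv⟩ := hsc 0
    have h1 : ((G.blowup 2).adjMatrix ℝ).mulVec (fun p => x p.2)
        = (0 : ℝ) • (fun p => x p.2) := by
      funext ⟨i, y⟩
      rw [blowup_mulVec]
      have : (fun w => x w + x w) = (2 : ℝ) • x := by funext w; simp [two_mul]
      simp only [this, Matrix.mulVec_smul, hx]
      simp
    have h2 : ((G.blowup 2).adjMatrix ℝ).mulVec
        (fun p => if p.1 = 0 then x p.2 else -x p.2)
        = (0 : ℝ) • (fun p => if p.1 = 0 then x p.2 else -x p.2) := by
      funext ⟨i, y⟩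
      rw [blowup_mulVec]
      have : (fun w => (if (0 : ZMod 2) = 0 then x w else -x w)
          + (if (1 : ZMod 2) = 0 then x w else -x w)) = (0 : V → ℝ) := by
        funext w
        rw [if_pos rfl, if_neg (by decide)]
        simp
      simp only [this, Matrix.mulVec_zero]
      simp
    have k1' : x u = ε * x u := by simpa using hv _ h1
    have k2' : x u = ε * (-(x u)) := by
      simpa [if_neg (show (1 : ZMod 2) ≠ 0 by decide)] using hv _ h2
    rcases hε with rfl | rfl
    · rw [one_mul] at k2'
      exact hxu (by linarith)
    · exact hxu (by linarith)
end

section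
/- If n ≥ 3, then no two vertices of the blow-up ⊗^n G of a graph G are strongly cospectral. -/
/-!
If `x` has a twin `z` (a vertex with the same neighbourhood), then `e_x - e_z` lies in the kernel
of the adjacency matrix. When `z` can be chosen different from `y`, this eigenvector vanishes at
`y` but not at `x`, which strong cospectrality forbids. In the blow-up `⊗ⁿ G` every vertex `(i, v)`
has the twins `(k, v)`, and for `n ≥ 3` some `k` differs from both `x.1` and `y.1`.
-/

open Matrix

theorem StronglyCospectral.eq_zero_of_eq_zero {W : Type*} [Fintype W] {B : Matrix W W ℝ}
    {x y : W} (h : StronglyCospectral B x y) {μ : ℝ} {v : W → ℝ} (hv : B *ᵥ v = μ • v)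
    (hy : v y = 0) : v x = 0 := by
  obtain ⟨ε, -, hε⟩ := h μ
  rw [hε v hv, hy, mul_zero]

namespace SimpleGraph

variable {W : Type*} [Fintype W] (H : SimpleGraph W) [DecidableRel H.Adj]

theorem adjMatrix_mulVec_single_sub_single_of_twins [DecidableEq W] {a b : W}
    (hab : ∀ w, H.Adj w a ↔ H.Adj w b) :
    H.adjMatrix ℝ *ᵥ (Pi.single a 1 - Pi.single b 1) = 0 := by
  ext w
  simp [hab w]

theorem not_stronglyCospectral_of_twins {x y z : W} (hxz : ∀ w, H.Adj w x ↔ H.Adj w z)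
    (hxy : x ≠ y) (hzx : z ≠ x) (hzy : z ≠ y) :
    ¬ StronglyCospectral (H.adjMatrix ℝ) x y := by
  classical
  intro hsc
  set v : W → ℝ := Pi.single x 1 - Pi.single z 1
  have hker : H.adjMatrix ℝ *ᵥ v = (0 : ℝ) • v := by
    rw [zero_smul, H.adjMatrix_mulVec_single_sub_single_of_twins hxz]
  have hvx : v x = 0 := hsc.eq_zero_of_eq_zero hker (by simp [v, hxy.symm, hzy.symm])
  simp [v, hzx.symm] at hvx

end SimpleGraph

theorem blowup_no_strong_cospectrality_of_three_le_general {V : Type*} [Fintype V]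
    (n : ℕ) [NeZero n] (hn : 3 ≤ n) (G : SimpleGraph V) [DecidableRel G.Adj]
    (x y : ZMod n × V) (hxy : x ≠ y) :
    ¬ StronglyCospectral ((G.blowup n).adjMatrix ℝ) x y := by
  obtain ⟨k, hkx, hky⟩ : ∃ k : ZMod n, k ≠ x.1 ∧ k ≠ y.1 :=
    ENat.exists_ne_ne_of_three_le (by simpa using hn) x.1 y.1
  exact (G.blowup n).not_stronglyCospectral_of_twins (z := (k, x.2)) (fun _ => Iff.rfl) hxy
    (fun h => hkx (congrArg Prod.fst h)) (fun h => hky (congrArg Prod.fst h))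

/-- If `n ≥ 3`, then no two (distinct) vertices of the blow-up `⊗ⁿ G` are strongly
cospectral. -/
theorem blowup_no_strong_cospectrality_of_three_le {V : Type*} [Fintype V] [DecidableEq V]
    (n : ℕ) [NeZero n] (hn : 3 ≤ n) (G : SimpleGraph V) [DecidableRel G.Adj] (hG : G.Connected)
    (x y : ZMod n × V) (hxy : x ≠ y) :
    ¬ StronglyCospectral ((G.blowup n).adjMatrix ℝ) x y :=
  blowup_no_strong_cospectrality_of_three_le_general n hn G x y hxy
end

section
/- If the adjacency matrix of a connected graph G is invertible, then for every vertex u of G, the vertices (0,u) and (1,u) are strongly cospectral in the blow-up ⊗^2 G. -/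
/-
The adjacency matrix of `⊗ⁿ G` is `Jₙ ⊗ A`, so it sees a vector `v` only through
its fiber sums `x ↦ ∑ᵢ v (i, x)`. Hence an eigenvector for `μ ≠ 0` is constant on every
fiber, while for `μ = 0` the fiber sums lie in the kernel of `A`, which is trivial when
`A` is invertible; for `n = 2` this gives `v (0, u) = -v (1, u)`.
-/

open Matrix

namespace SimpleGraph

variable {V : Type*} {n : ℕ} [NeZero n]

def fiberSum (v : ZMod n × V → ℝ) (x : V) : ℝ :=
  ∑ i, v (i, x)

theorem fiberSum_two (v : ZMod 2 × V → ℝ) (x : V) : fiberSum v x = v (0, x) + v (1, x) :=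
  Fin.sum_univ_two _

variable [Fintype V] {G : SimpleGraph V} [DecidableRel G.Adj]

theorem blowup_adjMatrix_mulVec_apply (v : ZMod n × V → ℝ) (i : ZMod n) (x : V) :
    ((G.blowup n).adjMatrix ℝ *ᵥ v) (i, x) = (G.adjMatrix ℝ *ᵥ fiberSum v) x := by
  simp only [mulVec, dotProduct, adjMatrix_apply, blowup, Fintype.sum_prod_type, fiberSum,
    Finset.mul_sum]
  exact Finset.sum_comm

theorem blowup_eigenvector_apply_eq {μ : ℝ} (hμ : μ ≠ 0) {v : ZMod n × V → ℝ}
    (hv : (G.blowup n).adjMatrix ℝ *ᵥ v = μ • v) (i j : ZMod n) (x : V) :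
    v (i, x) = v (j, x) := by
  have hi := congrFun hv (i, x)
  have hj := congrFun hv (j, x)
  rw [blowup_adjMatrix_mulVec_apply, Pi.smul_apply, smul_eq_mul] at hi hj
  exact mul_left_cancel₀ hμ (hi.symm.trans hj)

theorem fiberSum_eq_zero_of_blowup_mulVec_eq_zero [DecidableEq V] (hA : IsUnit (G.adjMatrix ℝ))
    {v : ZMod n × V → ℝ} (hv : (G.blowup n).adjMatrix ℝ *ᵥ v = 0) : fiberSum v = 0 := by
  apply mulVec_injective_iff_isUnit.2 hA
  ext x
  rw [← blowup_adjMatrix_mulVec_apply v 0 x, hv, mulVec_zero]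
  rfl

end SimpleGraph

open SimpleGraph in
theorem blowup_two_strongly_cospectral_of_invertible_general {V : Type*} [Fintype V] [DecidableEq V]
    (G : SimpleGraph V) [DecidableRel G.Adj]
    (hA : IsUnit (G.adjMatrix ℝ)) (u : V) :
    StronglyCospectral ((G.blowup 2).adjMatrix ℝ) (0, u) (1, u) := by
  intro μ
  rcases eq_or_ne μ 0 with rfl | hμ
  · refine ⟨-1, Or.inr rfl, fun v hv => ?_⟩
    have hv0 : (G.blowup 2).adjMatrix ℝ *ᵥ v = 0 := by rwa [zero_smul] at hv
    have hsum := congrFun (fiberSum_eq_zero_of_blowup_mulVec_eq_zero hA hv0) u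
    rw [fiberSum_two, Pi.zero_apply] at hsum
    linarith
  · refine ⟨1, Or.inl rfl, fun v hv => ?_⟩
    rw [one_mul]
    exact blowup_eigenvector_apply_eq hμ hv 0 1 u

/-- If the adjacency matrix of a connected graph `G` is invertible, then for every vertex `u`,
the vertices `(0,u)` and `(1,u)` are strongly cospectral in `⊗² G`. -/
theorem blowup_two_strongly_cospectral_of_invertible {V : Type*} [Fintype V] [DecidableEq V]
    (G : SimpleGraph V) [DecidableRel G.Adj] (hG : G.Connected)
    (hA : IsUnit (G.adjMatrix ℝ)) (u : V) :
    StronglyCospectral ((G.blowup 2).adjMatrix ℝ) (0, u) (1, u) :=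
  blowup_two_strongly_cospectral_of_invertible_general G hA u
end

section
/- Let P_{2m+1} be the path on vertices 1,…,2m+1 with edges {u, u+1}. Then 0 is a simple eigenvalue of P_{2m+1}, with eigenvector Σ_{k=0}^{m} (−1)^k e_{2k+1}, and a vertex u satisfies 0 ∉ σ_u(P_{2m+1}) if and only if u is even. -/
open scoped Classical

lemma path_mulVec {n : ℕ} (y : Fin n → ℝ) (i : Fin n) :
    (((SimpleGraph.pathGraph n).adjMatrix ℝ).mulVec y) i =
      (if h : (i:ℕ) + 1 < n then y ⟨(i:ℕ)+1, h⟩ else 0) +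
      (if h : 0 < (i:ℕ) then y ⟨(i:ℕ)-1, by omega⟩ else 0) := by
  rw [Matrix.mulVec, dotProduct]
  simp only [SimpleGraph.adjMatrix_apply, SimpleGraph.pathGraph_adj, ite_mul, one_mul, zero_mul]
  have key : ∀ j : Fin n, (if ((i:ℕ)+1 = (j:ℕ) ∨ (j:ℕ)+1 = (i:ℕ)) then y j else 0)
      = (if (i:ℕ)+1 = (j:ℕ) then y j else 0) + (if (j:ℕ)+1 = (i:ℕ) then y j else 0) := by
    intro j
    by_cases h1 : (i:ℕ)+1 = (j:ℕ) <;> by_cases h2 : (j:ℕ)+1 = (i:ℕ) <;>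
      simp [h1, h2] <;> omega
  rw [Finset.sum_congr rfl (fun j _ => key j), Finset.sum_add_distrib]
  congr 1
  · split
    · next h =>
      have e : ∀ j : Fin n, ((i:ℕ)+1 = (j:ℕ)) ↔ j = ⟨(i:ℕ)+1, h⟩ := by
        intro j; rw [Fin.ext_iff]; exact eq_comm
      simp only [e]
      rw [Finset.sum_ite_eq' Finset.univ]
      simp
    · next h =>
      exact Finset.sum_eq_zero fun j _ => by rw [if_neg]; omega
  · split
    · next h =>
      have e : ∀ j : Fin n, ((j:ℕ)+1 = (i:ℕ)) ↔ j = ⟨(i:ℕ)-1, by omega⟩ := by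
        intro j; rw [Fin.ext_iff]; constructor <;> intro hh <;> simp at hh ⊢ <;> omega
      simp only [e]
      rw [Finset.sum_ite_eq' Finset.univ]
      simp
    · next h =>
      exact Finset.sum_eq_zero fun j _ => by rw [if_neg]; omega

lemma path_mulVec' {n : ℕ} (y : Fin n → ℝ) (i : ℕ) (hi : i < n) :
    (((SimpleGraph.pathGraph n).adjMatrix ℝ).mulVec y) ⟨i, hi⟩ =
      (if h : i + 1 < n then y ⟨i+1, h⟩ else 0) +
      (if h : 0 < i then y ⟨i-1, by omega⟩ else 0) := by
  have := path_mulVec y ⟨i, hi⟩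
  simpa using this

/-- For the path `P_{2m+1}` (vertices `0,…,2m` here, corresponding to `1,…,2m+1` in the paper),
`0` is a simple eigenvalue with eigenvector alternating `±1` on the vertices with even index
(odd label), and `0 ∉ σ_u` iff the label of `u` is even (i.e. its index is odd). -/
theorem pathGraph_odd_zero_eigenvalue (m : ℕ) :
    letI A := (SimpleGraph.pathGraph (2 * m + 1)).adjMatrix ℝ
    letI x : Fin (2 * m + 1) → ℝ :=
      fun i => if (i : ℕ) % 2 = 0 then (-1 : ℝ) ^ ((i : ℕ) / 2) else 0
    A.mulVec x = 0 ∧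
    (∀ y : Fin (2 * m + 1) → ℝ, A.mulVec y = 0 → ∃ c : ℝ, y = c • x) ∧
    (∀ i : Fin (2 * m + 1),
      (∀ v : Fin (2 * m + 1) → ℝ, A.mulVec v = 0 → v i = 0) ↔ Odd (i : ℕ)) := by
  set A := (SimpleGraph.pathGraph (2 * m + 1)).adjMatrix ℝ with hAdef
  set x : Fin (2 * m + 1) → ℝ :=
    (fun i => if (i : ℕ) % 2 = 0 then (-1 : ℝ) ^ ((i : ℕ) / 2) else 0) with hxdef
  have hx : A.mulVec x = 0 := by
    funext i
    rw [path_mulVec]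
    simp only [Pi.zero_apply, hxdef, Fin.val_mk]
    rcases Nat.even_or_odd (i : ℕ) with he | ho
    · have he' : (i:ℕ) % 2 = 0 := Nat.even_iff.mp he
      split
      · rw [if_neg (show ¬(((i:ℕ)+1) % 2 = 0) by omega)]
        split
        · next hp => rw [if_neg (show ¬((((i:ℕ)-1)) % 2 = 0) by omega)]; norm_num
        · norm_num
      · split
        · next hp => rw [if_neg (show ¬((((i:ℕ)-1)) % 2 = 0) by omega)]; norm_num
        · norm_num
    · rw [Nat.odd_iff] at ho
      have hisLt := i.isLt
      have hlt : (i:ℕ) + 1 < 2*m+1 := by omega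
      have hpos : 0 < (i:ℕ) := by omega
      rw [dif_pos hlt, dif_pos hpos,
        if_pos (show ((i:ℕ)+1) % 2 = 0 by omega),
        if_pos (show (((i:ℕ)-1)) % 2 = 0 by omega),
        show ((i:ℕ)+1)/2 = ((i:ℕ)-1)/2 + 1 by omega, pow_succ]
      ring
  have hspan : ∀ y : Fin (2 * m + 1) → ℝ, A.mulVec y = 0 → ∃ c : ℝ, y = c • x := by
    intro y hy
    set Y : ℕ → ℝ := fun k => if h : k < 2*m+1 then y ⟨k, h⟩ else 0 with hYdef
    have hYout : ∀ k, ¬(k < 2*m+1) → Y k = 0 := fun k h => dif_neg h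
    have hY1 : Y 1 = 0 := by
      have h0 := congrFun hy ⟨0, by omega⟩
      rw [path_mulVec' y 0 (by omega)] at h0
      rw [dif_neg (by omega : ¬ (0:ℕ) < 0)] at h0
      simp only [Pi.zero_apply, add_zero] at h0
      exact h0
    have hrec : ∀ j : ℕ, 0 < j → j < 2*m+1 → Y (j-1) + Y (j+1) = 0 := by
      intro j hj hjn
      have h0 := congrFun hy ⟨j, hjn⟩
      rw [path_mulVec' y j hjn, dif_pos hj] at h0
      simp only [Pi.zero_apply] at h0
      have e1 : (if h : j+1 < 2*m+1 then y ⟨j+1, h⟩ else 0) = Y (j+1) := rfl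
      have e2 : Y (j-1) = y ⟨j-1, by omega⟩ := dif_pos (by omega)
      rw [e1] at h0
      rw [e2]
      linarith
    have hodd : ∀ k, Y (2*k+1) = 0 := by
      intro k
      induction k with
      | zero => simpa using hY1
      | succ k ih =>
        by_cases h : 2*(k+1)+1 < 2*m+1
        · have hr := hrec (2*k+2) (by omega) (by omega)
          rw [show 2*k+2-1 = 2*k+1 by omega] at hr
          rw [show 2*(k+1)+1 = 2*k+2+1 by ring]
          linarith
        · exact hYout _ h
    have heven : ∀ k, 2*k < 2*m+1 → Y (2*k) = (-1)^k * Y 0 := by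
      intro k
      induction k with
      | zero => simp
      | succ k ih =>
        intro hk
        have hk' : 2*k < 2*m+1 := by omega
        have hr := hrec (2*k+1) (by omega) (by omega)
        rw [show 2*k+1-1 = 2*k by omega] at hr
        rw [show 2*(k+1) = 2*k+1+1 by ring, pow_succ]
        have := ih hk'
        linarith
    refine ⟨Y 0, ?_⟩
    funext i
    have hyi : y i = Y (i : ℕ) := by
      rw [hYdef]
      simp only [i.isLt, dif_pos, Fin.eta]
    simp only [Pi.smul_apply, smul_eq_mul, hxdef]
    rcases Nat.even_or_odd (i : ℕ) with he | ho
    · have e2 : (i:ℕ) % 2 = 0 := Nat.even_iff.mp he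
      rw [hyi, if_pos e2]
      have hlt : 2 * ((i:ℕ)/2) < 2*m+1 := by
        have := i.isLt; omega
      calc Y (i:ℕ) = Y (2 * ((i:ℕ)/2)) := by rw [show 2 * ((i:ℕ)/2) = (i:ℕ) by omega]
        _ = (-1)^((i:ℕ)/2) * Y 0 := heven _ hlt
        _ = Y 0 * (-1)^((i:ℕ)/2) := by ring
    · rw [Nat.odd_iff] at ho
      rw [hyi, if_neg (by omega : ¬ ((i:ℕ) % 2 = 0)),
        show (i:ℕ) = 2*((i:ℕ)/2)+1 by omega, hodd]
      ring
  refine ⟨hx, hspan, ?_⟩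
  intro i
  constructor
  · intro hall
    by_contra hni
    have he : (i:ℕ) % 2 = 0 := by
      rcases Nat.even_or_odd (i:ℕ) with h | h
      · exact Nat.even_iff.mp h
      · exact absurd h hni
    have h0 := hall x hx
    rw [hxdef] at h0
    simp only [if_pos he] at h0
    exact pow_ne_zero _ (by norm_num : (-1:ℝ) ≠ 0) h0
  · intro hoi v hv
    obtain ⟨c, rfl⟩ := hspan v hv
    rw [Nat.odd_iff] at hoi
    simp [hxdef, hoi]
end

section
/- Let u be a vertex of a graph G with 0 ∉ σ_u(G), and suppose there exists τ ∈ ℝ with exp(−2iλτ) = −1 for every λ ∈ σ_u(G). Then the blow-up ⊗^2 G admits perfect state transfer between (0,u) and (1,u) at time τ with phase −1; that is, e_{(0,u)}^T exp(−iτ (J_2 ⊗ A)) e_{(1,u)} = −1. -/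
/-!
The adjacency matrix of the blow-up is `J ⊗ A` with `J` the all-ones matrix, and
`J ⊗ A = (Q ⊗ 1)(1 ⊗ 2A)` with `Q = J / 2` idempotent. For an idempotent `p` commuting with `x`
the exponential series collapses to `exp (p x) = 1 - p + p exp x`, so
`exp (-iτ (J ⊗ A)) = 1 - Q ⊗ 1 + Q ⊗ exp (-2iτ A)`, whose `((0,u),(1,u))` entry is
`(exp (-2iτ A)_{uu} - 1) / 2`. Diagonalising `A`, `exp (-2iτ A)_{uu}` is a convex combination of
the `exp (-2iλτ)` with weights `|U_{uj}|²`; only eigenvalues with an eigenvector not vanishing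
at `u` carry weight, and these all give `-1`.
-/

open Matrix NormedSpace
open scoped Kronecker

theorem NormedSpace.exp_mul_of_isIdempotentElem {𝔸 : Type*} [NormedRing 𝔸] [NormedAlgebra ℚ 𝔸]
    [CompleteSpace 𝔸] {p x : 𝔸} (hp : IsIdempotentElem p) (hpx : Commute p x) :
    exp (p * x) = 1 - p + p * exp x := by
  have hsum := (exp_series_hasSum_exp' (𝕂 := ℚ) x).mul_left p
  rw [← hasSum_nat_add_iff' 1] at hsum
  refine (exp_series_hasSum_exp' (𝕂 := ℚ) (p * x)).unique ?_
  rw [← hasSum_nat_add_iff' 1]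
  convert hsum using 1
  · ext n
    rw [hpx.mul_pow, hp.pow_succ_eq, mul_smul_comm]
  · simp only [Finset.range_one, Finset.sum_singleton, Nat.factorial_zero, Nat.cast_one, inv_one,
      pow_zero, one_smul, Algebra.mul_smul_comm, mul_one]
    abel

theorem Matrix.exp_mul_of_isIdempotentElem {m 𝔸 : Type*} [Fintype m] [DecidableEq m]
    [NormedRing 𝔸] [NormedAlgebra ℚ 𝔸] [CompleteSpace 𝔸] {P X : Matrix m m 𝔸}
    (hP : IsIdempotentElem P) (hPX : Commute P X) : exp (P * X) = 1 - P + P * exp X := by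
  let _ : NormedRing (Matrix m m 𝔸) := Matrix.linftyOpNormedRing
  let _ : NormedAlgebra ℚ (Matrix m m 𝔸) := Matrix.linftyOpNormedAlgebra
  -- The uniformity of the operator norm agrees with the product uniformity only up to unfolding,
  -- so completeness has to be supplied by hand.
  exact @NormedSpace.exp_mul_of_isIdempotentElem _ _ _
    (inferInstanceAs (CompleteSpace (Matrix m m 𝔸))) _ _ hP hPX

theorem Matrix.exp_one_kronecker {m n R : Type*} [Fintype m] [DecidableEq m] [Fintype n]
    [DecidableEq n] [NormedCommRing R] [NormedAlgebra ℚ R] [CompleteSpace R] (B : Matrix n n R) :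
    exp ((1 : Matrix m m R) ⊗ₖ B) = 1 ⊗ₖ exp B := by
  let f := (kroneckerAlgEquiv m n R).toAlgHom.comp
    (Algebra.TensorProduct.includeRight (R := R) (A := Matrix m m R))
  have hf : ∀ C, f C = 1 ⊗ₖ C := fun C => by simp [f]
  have hcont : Continuous f := by
    simp only [funext hf]
    exact continuous_matrix fun i j => continuous_const.mul (continuous_id.matrix_elem _ _)
  let _ : NormedRing (Matrix n n R) := Matrix.linftyOpNormedRing
  let _ : NormedAlgebra ℚ (Matrix n n R) := Matrix.linftyOpNormedAlgebra
  let _ : NormedRing (Matrix (m × n) (m × n) R) := Matrix.linftyOpNormedRing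
  have h := @map_exp (Matrix n n R) _ _ _ (inferInstanceAs (CompleteSpace (Matrix n n R)))
    _ _ _ _ _ f hcont B
  rw [hf, hf] at h
  exact h.symm

theorem Matrix.allOnes_mul_allOnes {ι α : Type*} [Fintype ι] [NonAssocSemiring α] :
    (of fun _ _ : ι => (1 : α)) * of (fun _ _ => 1) = (Fintype.card ι : α) • of fun _ _ => 1 := by
  ext i j
  simp [mul_apply]

theorem Matrix.exp_allOnes_kronecker {ι n 𝕜 : Type*} [Fintype ι] [DecidableEq ι] [Nonempty ι]
    [Fintype n] [DecidableEq n] [RCLike 𝕜] (B : Matrix n n 𝕜) :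
    exp ((of fun _ _ : ι => (1 : 𝕜)) ⊗ₖ B) =
      1 - ((Fintype.card ι : 𝕜)⁻¹ • of fun _ _ => 1) ⊗ₖ (1 : Matrix n n 𝕜) +
        ((Fintype.card ι : 𝕜)⁻¹ • of fun _ _ => 1) ⊗ₖ exp ((Fintype.card ι : 𝕜) • B) := by
  set k : 𝕜 := (Fintype.card ι : 𝕜)
  set Q : Matrix ι ι 𝕜 := k⁻¹ • of fun _ _ => 1
  have hk : k ≠ 0 := Nat.cast_ne_zero.mpr Fintype.card_ne_zero
  have hQQ : Q * Q = Q := by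
    simp only [Q, Matrix.smul_mul, Matrix.mul_smul, allOnes_mul_allOnes, smul_smul]
    rw [show (Fintype.card ι : 𝕜) = k from rfl, inv_mul_cancel₀ hk, mul_one]
  have hQ : IsIdempotentElem (Q ⊗ₖ (1 : Matrix n n 𝕜)) := by
    rw [IsIdempotentElem, ← mul_kronecker_mul, one_mul, hQQ]
  have hcomm : Commute (Q ⊗ₖ (1 : Matrix n n 𝕜)) (1 ⊗ₖ (k • B)) := by
    rw [Commute, SemiconjBy, ← mul_kronecker_mul, ← mul_kronecker_mul]
    simp
  have hfactor : (of fun _ _ : ι => (1 : 𝕜)) ⊗ₖ B = (Q ⊗ₖ 1) * (1 ⊗ₖ (k • B)) := by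
    rw [← mul_kronecker_mul, mul_one, one_mul, smul_kronecker, kronecker_smul, smul_smul,
      inv_mul_cancel₀ hk, one_smul]
  rw [hfactor, exp_mul_of_isIdempotentElem hQ hcomm, exp_one_kronecker, ← mul_kronecker_mul,
    mul_one, one_mul]

namespace Matrix.IsHermitian

variable {n 𝕜 : Type*} [Fintype n] [DecidableEq n] [RCLike 𝕜] {A : Matrix n n 𝕜}

theorem exp_smul_eq (hA : A.IsHermitian) (c : 𝕜) :
    NormedSpace.exp (c • A) = (hA.eigenvectorUnitary : Matrix n n 𝕜) *
      diagonal (fun j => NormedSpace.exp (c * (hA.eigenvalues j : 𝕜))) *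
        star (hA.eigenvectorUnitary : Matrix n n 𝕜) := by
  have h := Matrix.exp_units_conj (Unitary.toUnits hA.eigenvectorUnitary)
    (diagonal fun j => c * (hA.eigenvalues j : 𝕜))
  rw [Unitary.val_toUnits_apply, Unitary.val_inv_toUnits_apply, ← Unitary.star_eq_inv,
    Unitary.coe_star, exp_diagonal, Pi.exp_def] at h
  conv_lhs => rw [hA.spectral_theorem]
  rw [Unitary.conjStarAlgAut_apply, ← Matrix.smul_mul, ← Matrix.mul_smul, ← diagonal_smul]
  exact h

theorem exp_smul_apply_self (hA : A.IsHermitian) {c w : 𝕜} {i : n}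
    (h : ∀ j, hA.eigenvectorBasis j i ≠ 0 → NormedSpace.exp (c * (hA.eigenvalues j : 𝕜)) = w) :
    NormedSpace.exp (c • A) i i = w := by
  rw [hA.exp_smul_eq, mul_apply]
  set U : Matrix n n 𝕜 := ↑hA.eigenvectorUnitary
  have hterm (j : n) :
      U i j * NormedSpace.exp (c * (hA.eigenvalues j : 𝕜)) * star U j i = w * (U i j * star U j i) := by
    by_cases hj : U i j = 0
    · simp [hj]
    · rw [h j hj]
      ring
  calc ∑ j, (U * diagonal fun j => NormedSpace.exp (c * (hA.eigenvalues j : 𝕜))) i j * star U j i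
      = ∑ j, w * (U i j * star U j i) := by simp only [mul_diagonal, hterm]
    _ = w := by
      rw [← Finset.mul_sum, ← mul_apply, Unitary.mul_star_self_of_mem hA.eigenvectorUnitary.2,
        one_apply_eq, mul_one]

end Matrix.IsHermitian

theorem SuppMem.of_map_ofReal_mulVec_eq {n : Type*} [Fintype n] {A : Matrix n n ℝ} {v : n → ℂ}
    {r : ℝ} {i : n} (hv : A.map (↑) *ᵥ v = r • v) (hi : v i ≠ 0) : SuppMem A r i := by
  have hpart (f : ℂ →ₗ[ℝ] ℝ) : A *ᵥ (f ∘ v) = r • (f ∘ v) := by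
    funext k
    have h := congrArg f (congrFun hv k)
    simp only [mulVec, dotProduct, map_apply, Pi.smul_apply, map_sum] at h
    simpa [mulVec, dotProduct, ← Complex.real_smul, map_smul] using h
  by_cases hre : (v i).re = 0
  · exact ⟨Complex.imLm ∘ v, hpart _, fun him => hi (Complex.ext hre him)⟩
  · exact ⟨Complex.reLm ∘ v, hpart _, hre⟩

namespace SimpleGraph

variable {V : Type*} (G : SimpleGraph V) [DecidableRel G.Adj]

theorem map_adjMatrix {R S : Type*} [NonAssocSemiring R] [NonAssocSemiring S] (f : R →+* S) :
    (G.adjMatrix R).map f = G.adjMatrix S := by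
  ext i j
  simp [adjMatrix_apply, apply_ite f]

theorem adjMatrix_blowup {α : Type*} [MulZeroOneClass α] (n : ℕ) :
    (G.blowup n).adjMatrix α = (of fun _ _ : ZMod n => (1 : α)) ⊗ₖ G.adjMatrix α := by
  ext ⟨a, x⟩ ⟨b, y⟩
  simp only [adjMatrix_apply, kroneckerMap_apply, of_apply, one_mul]
  rfl

theorem exp_smul_adjMatrix_apply_self [Fintype V] [DecidableEq V] {c w : ℂ} {u : V}
    (h : ∀ lam : ℝ, SuppMem (G.adjMatrix ℝ) lam u → Complex.exp (c * lam) = w) :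
    exp (c • G.adjMatrix ℂ) u u = w := by
  have hA := G.isHermitian_adjMatrix ℂ
  refine hA.exp_smul_apply_self fun j hj => ?_
  have hsupp : SuppMem (G.adjMatrix ℝ) (hA.eigenvalues j) u := by
    refine .of_map_ofReal_mulVec_eq ?_ hj
    convert hA.mulVec_eigenvectorBasis j using 2
    exact G.map_adjMatrix Complex.ofRealHom
  rw [← h _ hsupp, Complex.exp_eq_exp_ℂ, RCLike.ofReal_eq_complex_ofReal]

end SimpleGraph

theorem blowup_pst_of_exp_eq_neg_one_general {V : Type*} [Fintype V] [DecidableEq V]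
    (G : SimpleGraph V) [DecidableRel G.Adj] (u : V) (τ : ℝ)
    (hτ : ∀ lam : ℝ, SuppMem (G.adjMatrix ℝ) lam u →
      Complex.exp (-2 * Complex.I * lam * τ) = -1) :
    NormedSpace.exp ((-(Complex.I * τ)) • (G.blowup 2).adjMatrix ℂ) (0, u) (1, u) = -1 := by
  have hdiag : exp ((2 : ℂ) • (-(Complex.I * τ)) • G.adjMatrix ℂ) u u = -1 := by
    rw [smul_smul]
    refine G.exp_smul_adjMatrix_apply_self fun lam hlam => ?_
    rw [← hτ lam hlam]
    ring_nf
  rw [G.adjMatrix_blowup, ← kronecker_smul, exp_allOnes_kronecker]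
  simp only [Matrix.add_apply, Matrix.sub_apply, Matrix.smul_apply, kroneckerMap_apply,
    of_apply, ZMod.card, Nat.cast_ofNat]
  rw [hdiag]
  norm_num

/-- If `0 ∉ σ_u(G)` and `exp(−2iλτ) = −1` for every `λ ∈ σ_u(G)`, then `⊗² G` has perfect
state transfer between `(0,u)` and `(1,u)` at time `τ` with phase `−1`. -/
theorem blowup_pst_of_exp_eq_neg_one {V : Type*} [Fintype V] [DecidableEq V]
    (G : SimpleGraph V) [DecidableRel G.Adj] (hG : G.Connected) (u : V) (τ : ℝ)
    (h0 : ¬ SuppMem (G.adjMatrix ℝ) 0 u)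
    (hτ : ∀ lam : ℝ, SuppMem (G.adjMatrix ℝ) lam u →
      Complex.exp (-2 * Complex.I * lam * τ) = -1) :
    NormedSpace.exp ((-(Complex.I * τ)) • (G.blowup 2).adjMatrix ℂ) (0, u) (1, u) = -1 :=
  blowup_pst_of_exp_eq_neg_one_general G u τ hτ
end

section
/- Let u be a vertex of a graph G with 0 ∉ σ_u(G). If ⊗^2 G admits perfect state transfer between (0,u) and (1,u) at time τ, then exp(−2iλτ) = −1 for every λ ∈ σ_u(G). -/
/-!
The evolution `W = exp (-iτ (J₂ ⊗ A))` is unitary, so an entry of modulus one forces row `(0, u)`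
of `W` to vanish off `(1, u)`: `(W f) (0, u) = W (0, u) (1, u) * f (1, u)` for every vector `f`.
Test this on two eigenvectors of `J₂ ⊗ A`. The vector `e (0, u) - e (1, u)` lies in the kernel,
so `W` fixes it and `W (0, u) (1, u) = -1`. For an eigenvector `x` of `A` with eigenvalue `λ` and
`x u ≠ 0`, the vector `x ∘ snd` has eigenvalue `2λ`, so `W (0, u) (1, u) = exp (-2iλτ)`.
-/

open NormedSpace Matrix

namespace Matrix

variable {n 𝕂 : Type*} [Fintype n] [DecidableEq n] [RCLike 𝕂]

theorem mulVec_apply_eq_of_norm_apply_eq_one {U : Matrix n n 𝕂}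
    (hU : U ∈ unitary (Matrix n n 𝕂)) {i j : n} (hij : ‖U i j‖ = 1) (v : n → 𝕂) :
    (U *ᵥ v) i = U i j * v j := by
  have hrow : ∑ k, ‖U i k‖ ^ 2 = 1 := by
    have h : (U * star U) i i = 1 := by rw [Unitary.mul_star_self_of_mem hU, one_apply_eq]
    simp only [mul_apply, star_apply, RCLike.star_def, RCLike.mul_conj, ← RCLike.ofReal_pow,
      ← RCLike.ofReal_sum] at h
    exact_mod_cast h
  rw [← Finset.add_sum_erase _ _ (Finset.mem_univ j), hij, one_pow, add_eq_left] at hrow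
  have hzero : ∀ k ≠ j, U i k = 0 := fun k hk => by
    simpa using (Finset.sum_eq_zero_iff_of_nonneg fun _ _ => by positivity).mp hrow k
      (Finset.mem_erase.mpr ⟨hk, Finset.mem_univ k⟩)
  exact Finset.sum_eq_single j (fun k _ hk => by simp [hzero k hk]) (by simp)

theorem exp_mulVec_of_mulVec_eq_smul {A : Matrix n n 𝕂} {v : n → 𝕂} {μ : 𝕂}
    (h : A *ᵥ v = μ • v) : exp A *ᵥ v = exp μ • v := by
  open scoped Norms.Operator in
  have hsemi : SemiconjBy (replicateCol n v) (algebraMap 𝕂 _ μ) A := by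
    rw [SemiconjBy, ← replicateCol_mulVec, h, replicateCol_smul, ← Algebra.commutes,
      ← Algebra.smul_def]
  have hexp := hsemi.exp_right
  rw [SemiconjBy, ← algebraMap_exp_comm, ← replicateCol_mulVec, ← Algebra.commutes,
    ← Algebra.smul_def, ← replicateCol_smul] at hexp
  funext i
  exact congrFun₂ hexp.symm i i

theorem exp_smul_mulVec_of_mulVec_eq_smul (c : 𝕂) {A : Matrix n n 𝕂} {v : n → 𝕂} {μ : 𝕂}
    (h : A *ᵥ v = μ • v) : exp (c • A) *ᵥ v = exp (c * μ) • v :=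
  exp_mulVec_of_mulVec_eq_smul (by rw [smul_mulVec, h, smul_smul])

theorem exp_mem_unitary_of_mem_skewAdjoint {A : Matrix n n 𝕂}
    (hA : A ∈ skewAdjoint (Matrix n n 𝕂)) : exp A ∈ unitary (Matrix n n 𝕂) := by
  rw [Unitary.mem_iff, star_eq_conjTranspose, ← exp_conjTranspose, ← star_eq_conjTranspose,
    skewAdjoint.mem_iff.mp hA, ← exp_add_of_commute _ _ (Commute.refl A).neg_left,
    ← exp_add_of_commute _ _ (Commute.refl A).neg_right, neg_add_cancel, add_neg_cancel,
    exp_zero, and_self]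

end Matrix

namespace SimpleGraph

variable {V R : Type*} [Fintype V] (G : SimpleGraph V) [DecidableRel G.Adj]

theorem adjMatrix_mulVec_comp {S : Type*} [NonAssocSemiring R] [NonAssocSemiring S]
    (f : R →+* S) (x : V → R) : G.adjMatrix S *ᵥ (f ∘ x) = f ∘ (G.adjMatrix R *ᵥ x) := by
  funext v
  simp [adjMatrix_mulVec_apply, map_sum]

variable {n : ℕ} [NeZero n]

theorem adjMatrix_blowup_mulVec_apply [NonAssocSemiring R] (f : ZMod n × V → R)
    (p : ZMod n × V) :
    ((G.blowup n).adjMatrix R *ᵥ f) p = (G.adjMatrix R *ᵥ fun w => ∑ b, f (b, w)) p.2 := by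
  simp only [mulVec, dotProduct, adjMatrix_apply, blowup, Fintype.sum_prod_type,
    Finset.mul_sum]
  exact Finset.sum_comm

theorem adjMatrix_blowup_mulVec_eq_zero [NonAssocSemiring R] {z : ZMod n × V → R}
    (hz : ∀ w, ∑ b, z (b, w) = 0) : (G.blowup n).adjMatrix R *ᵥ z = 0 := by
  funext p
  rw [adjMatrix_blowup_mulVec_apply]
  simp [hz]

theorem adjMatrix_blowup_mulVec_single_sub_single [DecidableEq V] [Ring R] (a b : ZMod n) (u : V) :
    (G.blowup n).adjMatrix R *ᵥ (Pi.single (a, u) 1 - Pi.single (b, u) 1) = 0 := by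
  refine G.adjMatrix_blowup_mulVec_eq_zero fun w => ?_
  by_cases hw : w = u <;> simp [Pi.single_apply, hw]

theorem adjMatrix_blowup_mulVec_comp_snd [Semiring R] {x : V → R} {lam : R}
    (hx : G.adjMatrix R *ᵥ x = lam • x) :
    (G.blowup n).adjMatrix R *ᵥ (x ∘ Prod.snd) = ((n : R) * lam) • (x ∘ Prod.snd) := by
  have hsum : (fun w => ∑ b : ZMod n, (x ∘ Prod.snd) (b, w)) = n • x := by
    funext w
    simp
  funext p
  rw [adjMatrix_blowup_mulVec_apply, hsum, mulVec_smul, hx]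
  simp [nsmul_eq_mul, mul_assoc]

end SimpleGraph

theorem exp_eq_neg_one_of_blowup_pst_general {V : Type*} [Fintype V] [DecidableEq V]
    (G : SimpleGraph V) [DecidableRel G.Adj] (u : V) (τ : ℝ)
    (hPST : ‖
      (NormedSpace.exp ((-(Complex.I * τ)) • (G.blowup 2).adjMatrix ℂ) (0, u) (1, u))‖ = 1) :
    ∀ lam : ℝ, SuppMem (G.adjMatrix ℝ) lam u →
      Complex.exp (-2 * Complex.I * lam * τ) = -1 := by
  rintro lam ⟨x, hx, hxu⟩
  set c : ℂ := -(Complex.I * τ)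
  set M := (G.blowup 2).adjMatrix ℂ
  have hc : c ∈ skewAdjoint ℂ := by simp [c, skewAdjoint.mem_iff]
  -- `(𝕂 := ℂ)` spares Lean an expensive unification of two paths to `Algebra ℚ (Matrix _ _ ℂ)`.
  have hW : exp (c • M) ∈ unitary _ := Matrix.exp_mem_unitary_of_mem_skewAdjoint (𝕂 := ℂ)
    (((G.blowup 2).isHermitian_adjMatrix ℂ).isSelfAdjoint.smul_mem_skewAdjoint hc)
  have hrow := mulVec_apply_eq_of_norm_apply_eq_one hW hPST
  have htransfer : exp (c • M) (0, u) (1, u) = -1 := by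
    have hz := G.adjMatrix_blowup_mulVec_single_sub_single (R := ℂ) (n := 2) 0 1 u
    have h := hrow (Pi.single (0, u) 1 - Pi.single (1, u) 1)
    rw [exp_smul_mulVec_of_mulVec_eq_smul (𝕂 := ℂ) (μ := 0) c (by simpa using hz)] at h
    simp at h
    linear_combination h
  have hxC : G.adjMatrix ℂ *ᵥ (Complex.ofRealHom ∘ x) = (lam : ℂ) • (Complex.ofRealHom ∘ x) := by
    rw [G.adjMatrix_mulVec_comp, hx]
    funext v
    simp
  have h := hrow ((Complex.ofRealHom ∘ x) ∘ Prod.snd)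
  rw [exp_smul_mulVec_of_mulVec_eq_smul (𝕂 := ℂ) c (G.adjMatrix_blowup_mulVec_comp_snd hxC),
    htransfer, ← Complex.exp_eq_exp_ℂ] at h
  have hexp : Complex.exp (c * (2 * lam)) = -1 :=
    mul_right_cancel₀ (b := (x u : ℂ)) (Complex.ofReal_ne_zero.mpr hxu) (by simpa using h)
  rw [← hexp]
  congr 1
  ring

/-- If `0 ∉ σ_u(G)` and `⊗² G` has perfect state transfer between `(0,u)` and `(1,u)` at
time `τ`, then `exp(−2iλτ) = −1` for every `λ ∈ σ_u(G)`. -/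
theorem exp_eq_neg_one_of_blowup_pst {V : Type*} [Fintype V] [DecidableEq V]
    (G : SimpleGraph V) [DecidableRel G.Adj] (hG : G.Connected) (u : V) (τ : ℝ)
    (h0 : ¬ SuppMem (G.adjMatrix ℝ) 0 u)
    (hPST : ‖
      (NormedSpace.exp ((-(Complex.I * τ)) • (G.blowup 2).adjMatrix ℂ) (0, u) (1, u))‖ = 1) :
    ∀ lam : ℝ, SuppMem (G.adjMatrix ℝ) lam u →
      Complex.exp (-2 * Complex.I * lam * τ) = -1 :=
  exp_eq_neg_one_of_blowup_pst_general G u τ hPST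
end

section
/- Let K_m be the complete graph on m ≥ 2 vertices with m odd. Then ⊗^2 K_m does not admit perfect state transfer between (0,u) and (1,u) for any vertex u and any time τ. -/
/-!
The adjacency matrix of `⊗ⁿ K_V` is `n(|V| - 1) • P - n • Q`, where `P` is the projection onto the
constant functions and `Q` the projection onto the functions of mean zero that depend only on the
`V`-coordinate; as `P`, `Q` are orthogonal idempotents, `exp(c A) = e^{c n (|V|-1)} P + e^{-c n} Q
+ (1 - P - Q)`. For `n = 2`, `|V| = m` and `c = -iτ`, the `((0,u),(1,u))` entry is
`((z - 1) + (m - 1)(w - 1)) / 2m` with `z = e^{-2iτ(m-1)}` and `w = e^{2iτ}` on the unit circle.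
Since `|z - 1|, |w - 1| ≤ 2`, modulus one forces `z = w = -1`; but `z w^{m-1} = 1`, while
`(-1)(-1)^{m-1} = -1` for odd `m`.
-/

open NormedSpace Nat Matrix

theorem IsIdempotentElem.exp_smul {𝕂 𝔸 : Type*} [RCLike 𝕂] [Ring 𝔸] [Algebra 𝕂 𝔸]
    [TopologicalSpace 𝔸] [IsTopologicalRing 𝔸] [ContinuousSMul 𝕂 𝔸] [T2Space 𝔸]
    {p : 𝔸} (hp : IsIdempotentElem p) (c : 𝕂) :
    exp (c • p) = exp c • p + (1 - p) := by
  have hterm : ∀ n : ℕ, ((n !⁻¹ : 𝕂) • c ^ n) • p + (if n = 0 then 1 - p else 0)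
      = (n !⁻¹ : 𝕂) • (c • p) ^ n := by
    rintro (_ | n)
    · simp
    · rw [smul_pow, hp.pow_succ_eq, smul_smul, if_neg n.succ_ne_zero, add_zero, smul_eq_mul]
  have hsum : HasSum (fun n : ℕ => (n !⁻¹ : 𝕂) • (c • p) ^ n) (exp c • p + (1 - p)) := by
    simpa only [hterm] using
      ((exp_series_hasSum_exp' (𝕂 := 𝕂) c).smul_const p).add (hasSum_ite_eq 0 (1 - p))
  rw [exp_eq_tsum 𝕂]
  exact hsum.tsum_eq

theorem Matrix.exp_smul_add_smul_of_mul_eq_zero {n 𝕂 : Type*} [Fintype n] [DecidableEq n]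
    [RCLike 𝕂] {P Q : Matrix n n 𝕂} (hP : IsIdempotentElem P) (hQ : IsIdempotentElem Q)
    (hPQ : P * Q = 0) (hQP : Q * P = 0) (a b : 𝕂) :
    exp (a • P + b • Q) = exp a • P + exp b • Q + (1 - P - Q) := by
  have hcomm : Commute P Q := hPQ.trans hQP.symm
  rw [Matrix.exp_add_of_commute _ _ ((hcomm.smul_left a).smul_right b), hP.exp_smul, hQ.exp_smul]
  simp only [add_mul, mul_add, sub_mul, mul_sub, smul_mul_assoc, mul_smul_comm, hPQ, one_mul,
    mul_one, smul_zero, zero_add, sub_zero]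
  abel

theorem Complex.norm_sub_one_le_two {z : ℂ} (hz : ‖z‖ = 1) : ‖z - 1‖ ≤ 2 :=
  (norm_sub_le z 1).trans (by rw [hz, norm_one]; norm_num)

theorem Complex.eq_neg_one_of_norm_sub_one_eq_two {z : ℂ} (hz : ‖z‖ = 1) (h : ‖z - 1‖ = 2) :
    z = -1 :=
  eq_of_norm_eq_of_norm_add_eq (by rw [hz, norm_neg, norm_one])
    (by rw [← sub_eq_add_neg, h, hz, norm_neg, norm_one]; norm_num)

theorem Complex.eq_neg_one_of_norm_sub_one_add_mul_sub_one {z w : ℂ} (hz : ‖z‖ = 1)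
    (hw : ‖w‖ = 1) {r : ℝ} (hr : 0 < r) (h : ‖z - 1 + r * (w - 1)‖ = 2 * (1 + r)) :
    z = -1 ∧ w = -1 := by
  have hz' := norm_sub_one_le_two hz
  have hw' := norm_sub_one_le_two hw
  have htri : 2 * (1 + r) ≤ ‖z - 1‖ + r * ‖w - 1‖ := by
    simpa only [h, norm_mul, Complex.norm_real, Real.norm_eq_abs, abs_of_pos hr] using
      norm_add_le (z - 1) (r * (w - 1))
  exact ⟨eq_neg_one_of_norm_sub_one_eq_two hz (by nlinarith),
    eq_neg_one_of_norm_sub_one_eq_two hw (by nlinarith)⟩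

namespace SimpleGraph

section Blowup

variable (ι V : Type*) [Fintype ι] [Fintype V]

noncomputable def projConst : Matrix (ι × V) (ι × V) ℂ :=
  of fun _ _ => (Fintype.card (ι × V) : ℂ)⁻¹

theorem isIdempotentElem_projConst : IsIdempotentElem (projConst ι V) := by
  ext x y
  simp only [projConst, mul_apply, of_apply, Finset.sum_const, Finset.card_univ, nsmul_eq_mul]
  rcases eq_or_ne (Fintype.card (ι × V) : ℂ) 0 with h | h <;> field_simp [h]

variable [DecidableEq V]

/-- Orthogonal projection onto the functions on `ι × V` that depend only on the `V`-coordinate. -/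
noncomputable def projFiberConst : Matrix (ι × V) (ι × V) ℂ :=
  of fun x y => if x.2 = y.2 then (Fintype.card ι : ℂ)⁻¹ else 0

theorem isIdempotentElem_projFiberConst : IsIdempotentElem (projFiberConst ι V) := by
  ext x y
  simp only [projFiberConst, mul_apply, of_apply, mul_ite, ite_mul, zero_mul, mul_zero,
    Fintype.sum_prod_type, Finset.sum_ite_eq', Finset.mem_univ, if_true]
  split_ifs
  · simp only [Finset.sum_const, Finset.card_univ, nsmul_eq_mul]
    field_simp
  · exact Finset.sum_const_zero

variable [Nonempty ι]

theorem projConst_mul_projFiberConst : projConst ι V * projFiberConst ι V = projConst ι V := by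
  ext x y
  simp only [projConst, projFiberConst, mul_apply, of_apply, mul_ite, mul_zero,
    Fintype.sum_prod_type, Finset.sum_ite_eq', Finset.mem_univ, if_true, Finset.sum_const,
    Finset.card_univ, nsmul_eq_mul, Fintype.card_prod, cast_mul]
  field_simp

theorem projFiberConst_mul_projConst : projFiberConst ι V * projConst ι V = projConst ι V := by
  ext x y
  simp [projConst, projFiberConst, mul_apply, Fintype.sum_prod_type]

variable {ι V}

theorem isIdempotentElem_projFiberConst_sub_projConst :
    IsIdempotentElem (projFiberConst ι V - projConst ι V) :=
  (isIdempotentElem_projConst ι V).sub (isIdempotentElem_projFiberConst ι V)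
    (projConst_mul_projFiberConst ι V) (projFiberConst_mul_projConst ι V)

theorem projConst_mul_projFiberConst_sub_projConst :
    projConst ι V * (projFiberConst ι V - projConst ι V) = 0 := by
  rw [mul_sub, projConst_mul_projFiberConst, (isIdempotentElem_projConst ι V).eq, sub_self]

theorem projFiberConst_sub_projConst_mul_projConst :
    (projFiberConst ι V - projConst ι V) * projConst ι V = 0 := by
  rw [sub_mul, projFiberConst_mul_projConst, (isIdempotentElem_projConst ι V).eq, sub_self]

end Blowup

variable {n : ℕ} [NeZero n] {V : Type*} [Fintype V] [DecidableEq V] [Nonempty V]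

theorem adjMatrix_blowup_top : ((⊤ : SimpleGraph V).blowup n).adjMatrix ℂ =
    (n * (Fintype.card V - 1) : ℂ) • projConst (ZMod n) V
      + (-n : ℂ) • (projFiberConst (ZMod n) V - projConst (ZMod n) V) := by
  ext x y
  have hV : (Fintype.card V : ℂ) ≠ 0 := Nat.cast_ne_zero.2 Fintype.card_ne_zero
  have hn : (n : ℂ) ≠ 0 := NeZero.ne _
  rw [adjMatrix_apply]
  simp only [blowup, comap_adj, top_adj, projConst, projFiberConst, Fintype.card_prod, ZMod.card,
    cast_mul, Matrix.add_apply, Matrix.smul_apply, Matrix.sub_apply, of_apply, smul_eq_mul, ne_eq,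
    ite_not]
  split_ifs <;> field_simp <;> ring

theorem exp_smul_adjMatrix_blowup_top_apply (c : ℂ) {i j : ZMod n} (hij : i ≠ j) (v : V) :
    exp (c • ((⊤ : SimpleGraph V).blowup n).adjMatrix ℂ) (i, v) (j, v) =
      (Complex.exp (c * (n * (Fintype.card V - 1))) - 1
        + (Fintype.card V - 1) * (Complex.exp (c * -n) - 1)) / (n * Fintype.card V) := by
  rw [adjMatrix_blowup_top, smul_add, smul_smul, smul_smul,
    exp_smul_add_smul_of_mul_eq_zero (isIdempotentElem_projConst _ _)
      isIdempotentElem_projFiberConst_sub_projConst projConst_mul_projFiberConst_sub_projConst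
      projFiberConst_sub_projConst_mul_projConst]
  have hV : (Fintype.card V : ℂ) ≠ 0 := Nat.cast_ne_zero.2 Fintype.card_ne_zero
  have hn : (n : ℂ) ≠ 0 := NeZero.ne _
  simp only [projConst, projFiberConst, Matrix.add_apply, Matrix.sub_apply, Matrix.smul_apply,
    of_apply, smul_eq_mul, one_apply_ne (i := (i, v)) (j := (j, v)) (by simpa using hij), if_true,
    Fintype.card_prod, ZMod.card, cast_mul, ← Complex.exp_eq_exp_ℂ]
  field_simp
  ring

end SimpleGraph

/-- For odd `m ≥ 2`, the blow-up `⊗² K_m` admits no perfect state transfer between `(0,u)`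
and `(1,u)`, at any time `τ`. -/
theorem blowup_complete_no_pst (m : ℕ) (hm2 : 2 ≤ m) (hm : Odd m) (u : Fin m) (τ : ℝ) :
    ‖(NormedSpace.exp
        ((-(Complex.I * τ)) •
          ((⊤ : SimpleGraph (Fin m)).blowup 2).adjMatrix ℂ) (0, u) (1, u))‖ ≠ 1 := by
  have : NeZero m := ⟨by omega⟩
  rw [SimpleGraph.exp_smul_adjMatrix_blowup_top_apply _ (by decide : (0 : ZMod 2) ≠ 1),
    Fintype.card_fin]
  set z := Complex.exp (-(Complex.I * τ) * ((2 : ℕ) * (m - 1)))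
  set w := Complex.exp (-(Complex.I * τ) * -(2 : ℕ))
  have hz : ‖z‖ = 1 := by simp [z, Complex.norm_exp]
  have hw : ‖w‖ = 1 := by simp [w, Complex.norm_exp]
  have hzw : z * w ^ (m - 1) = 1 := by
    rw [← Complex.exp_nat_mul, ← Complex.exp_add, Nat.cast_sub (by omega)]
    ring_nf
    exact Complex.exp_zero
  intro h
  have hnum : ‖z - 1 + ((m - 1 : ℝ) : ℂ) * (w - 1)‖ = 2 * (1 + (m - 1 : ℝ)) := by
    rw [norm_div, div_eq_one_iff_eq (by simp [NeZero.ne m])] at h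
    push_cast
    rw [h]
    simp
  obtain ⟨hz, hw⟩ := Complex.eq_neg_one_of_norm_sub_one_add_mul_sub_one hz hw
    (by rify at hm2; linarith) hnum
  rw [hz, hw, (Nat.Odd.sub_odd hm odd_one).neg_one_pow] at hzw
  norm_num at hzw
end

section
/- In the subdivided star SK_{1,m} (m > 1), the eigenvalue support of the center vertex u (the unique vertex of degree m) is exactly {√(m+1), 0, −√(m+1)}; in particular, every eigenvector of SK_{1,m} with eigenvalue 1 or −1 vanishes at u. -/
open scoped Classical

/-- The subdivided star `SK_{1,m}`. -/
def subdividedStar (m : ℕ) : SimpleGraph (Unit ⊕ Fin m ⊕ Fin m) :=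
  SimpleGraph.fromRel (fun x y =>
    (∃ j, x = Sum.inl () ∧ y = Sum.inr (Sum.inl j)) ∨
    (∃ j, x = Sum.inr (Sum.inl j) ∧ y = Sum.inr (Sum.inr j)))

lemma mv_center (m : ℕ) (x : (Unit ⊕ Fin m ⊕ Fin m) → ℝ) :
    ((subdividedStar m).adjMatrix ℝ).mulVec x (Sum.inl ()) = ∑ j, x (Sum.inr (Sum.inl j)) := by
  simp [Matrix.mulVec, dotProduct, Fintype.sum_sum_type, SimpleGraph.adjMatrix,
    subdividedStar, SimpleGraph.fromRel_adj]

lemma mv_mid (m : ℕ) (x : (Unit ⊕ Fin m ⊕ Fin m) → ℝ) (j : Fin m) :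
    ((subdividedStar m).adjMatrix ℝ).mulVec x (Sum.inr (Sum.inl j)) =
      x (Sum.inl ()) + x (Sum.inr (Sum.inr j)) := by
  simp [Matrix.mulVec, dotProduct, Fintype.sum_sum_type, SimpleGraph.adjMatrix,
    subdividedStar, SimpleGraph.fromRel_adj, Finset.sum_ite_eq, eq_comm]

lemma mv_leaf (m : ℕ) (x : (Unit ⊕ Fin m ⊕ Fin m) → ℝ) (j : Fin m) :
    ((subdividedStar m).adjMatrix ℝ).mulVec x (Sum.inr (Sum.inr j)) =
      x (Sum.inr (Sum.inl j)) := by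
  simp [Matrix.mulVec, dotProduct, Fintype.sum_sum_type, SimpleGraph.adjMatrix,
    subdividedStar, SimpleGraph.fromRel_adj, Finset.sum_ite_eq, eq_comm]

/-- Key: any eigenvector with lam² = 1 vanishes at the center. -/
lemma vanish (m : ℕ) (hm : 1 < m) (lam : ℝ) (hl : lam ^ 2 = 1)
    (x : (Unit ⊕ Fin m ⊕ Fin m) → ℝ)
    (hx : ((subdividedStar m).adjMatrix ℝ).mulVec x = lam • x) : x (Sum.inl ()) = 0 := by
  have j0 : Fin m := ⟨0, by omega⟩
  have hmid := congrFun hx (Sum.inr (Sum.inl j0))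
  have hleaf := congrFun hx (Sum.inr (Sum.inr j0))
  rw [mv_mid] at hmid
  rw [mv_leaf] at hleaf
  simp only [Pi.smul_apply, smul_eq_mul] at hmid hleaf
  -- lam * (lam * x(l)) = lam * x(m) = x u + x(l); lam^2 = 1
  linear_combination hmid + lam * hleaf + x (Sum.inr (Sum.inr j0)) * hl

/-- In `SK_{1,m}` (`m > 1`), the eigenvalue support of the center vertex is exactly
`{√(m+1), 0, −√(m+1)}`; in particular every eigenvector with eigenvalue `1` or `−1`
vanishes at the center. -/
theorem subdividedStar_center_support (m : ℕ) (hm : 1 < m) :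
    {lam : ℝ | SuppMem ((subdividedStar m).adjMatrix ℝ) lam (Sum.inl ())} =
      {Real.sqrt (m + 1), 0, -Real.sqrt (m + 1)} ∧
    (∀ (lam : ℝ), (lam = 1 ∨ lam = -1) →
      ∀ x : (Unit ⊕ Fin m ⊕ Fin m) → ℝ,
        ((subdividedStar m).adjMatrix ℝ).mulVec x = lam • x → x (Sum.inl ()) = 0) := by
  have hm1 : (0:ℝ) ≤ (m:ℝ) + 1 := by positivity
  have hsq : Real.sqrt (m + 1) ^ 2 = (m : ℝ) + 1 := Real.sq_sqrt hm1
  constructor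
  · ext lam
    simp only [Set.mem_setOf_eq, Set.mem_insert_iff, Set.mem_singleton_iff]
    constructor
    · rintro ⟨x, hx, hxu⟩
      by_cases h0 : lam = 0
      · right; left; exact h0
      -- equations
      have hu := congrFun hx (Sum.inl ())
      rw [mv_center] at hu
      simp only [Pi.smul_apply, smul_eq_mul] at hu
      have hmid : ∀ j : Fin m, lam * x (Sum.inr (Sum.inl j)) =
          x (Sum.inl ()) + x (Sum.inr (Sum.inr j)) := fun j => by
        have := congrFun hx (Sum.inr (Sum.inl j)); rw [mv_mid] at this
        simpa using this.symm
      have hleaf : ∀ j : Fin m, lam * x (Sum.inr (Sum.inr j)) =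
          x (Sum.inr (Sum.inl j)) := fun j => by
        have := congrFun hx (Sum.inr (Sum.inr j)); rw [mv_leaf] at this
        simpa using this.symm
      have hkey : ∀ j : Fin m, (lam ^ 2 - 1) * x (Sum.inr (Sum.inr j)) = x (Sum.inl ()) := by
        intro j
        have h1 := hmid j
        have h2 := hleaf j
        linear_combination lam * h2 + h1
      -- lam * x u = Σ x(m j) = lam * Σ x(l j)
      have hsum : lam * x (Sum.inl ()) = lam * ∑ j : Fin m, x (Sum.inr (Sum.inr j)) := by
        rw [Finset.mul_sum]
        rw [hu.symm]
        exact Finset.sum_congr rfl fun j _ => (hleaf j).symm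
      have hxu' : x (Sum.inl ()) = ∑ j : Fin m, x (Sum.inr (Sum.inr j)) :=
        mul_left_cancel₀ h0 hsum
      have hsum2 : (lam ^ 2 - 1) * ∑ j : Fin m, x (Sum.inr (Sum.inr j)) =
          (m : ℝ) * x (Sum.inl ()) := by
        rw [Finset.mul_sum, Finset.sum_congr rfl (fun j _ => hkey j), Finset.sum_const,
          Finset.card_univ, Fintype.card_fin, nsmul_eq_mul]
      have hlm : lam ^ 2 = (m : ℝ) + 1 := by
        rw [← hxu'] at hsum2
        have : (lam ^ 2 - 1) * x (Sum.inl ()) = ((m : ℝ)) * x (Sum.inl ()) := hsum2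
        have := mul_right_cancel₀ hxu this
        linarith
      have : (lam - Real.sqrt (m + 1)) * (lam + Real.sqrt (m + 1)) = 0 := by
        nlinarith [hsq, hlm]
      rcases mul_eq_zero.mp this with h | h
      · left; linarith
      · right; right; linarith
    · intro h
      rcases h with h | h | h
      · refine ⟨Sum.elim (fun _ => (m : ℝ)) (Sum.elim (fun _ => lam) (fun _ => 1)), ?_, ?_⟩
        · funext v
          rcases v with _ | j | j
          · rw [mv_center]; simp [h, hsq]; nlinarith [hsq]
          · rw [mv_mid]; simp [h]; nlinarith [hsq]
          · rw [mv_leaf]; simp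
        · simp; positivity
      · refine ⟨Sum.elim (fun _ => 1) (Sum.elim (fun _ => 0) (fun _ => -1)), ?_, ?_⟩
        · funext v
          rcases v with _ | j | j <;>
            first
              | (rw [mv_center]; simp [h])
              | (rw [mv_mid]; simp [h])
              | (rw [mv_leaf]; simp [h])
        · simp
      · refine ⟨Sum.elim (fun _ => (m : ℝ)) (Sum.elim (fun _ => lam) (fun _ => 1)), ?_, ?_⟩
        · funext v
          rcases v with _ | j | j
          · rw [mv_center]; simp [h]; nlinarith [hsq]
          · rw [mv_mid]; simp [h]; nlinarith [hsq]
          · rw [mv_leaf]; simp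
        · simp; positivity
  · intro lam hlam x hx
    apply vanish m hm lam _ x hx
    rcases hlam with h | h <;> rw [h] <;> ring
end
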